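/- Let s_h, s_l, s_z be independent vectors in {0,1}^n with i.i.d. Bernoulli(p_h), Bernoulli(p_l), Bernoulli(p_z) coordinates, p_h > p_l > 1/2, p_z > 1/2. For any ε > 0, if n ≥ 2 ln(1/ε) / ((p_h - p_l)²(2p_z - 1)²), then Pr(d(s_h, s_z) ≥ d(s_l, s_z)) ≤ ε. -/

import Mathlib

/-! Chernoff bound. Put `δ = (p_h - p_l)(2p_z - 1)`. The indicator of `d(s_l, s_z) ≤ d(s_h, s_z)`
is at most `exp (δ (d(s_h, s_z) - d(s_l, s_z)))`, whose expectation factors over the independent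
coordinates. In one coordinate `[a ≠ c] - [b ≠ c]` equals `1` and `-1` with probabilities `p` and
`q = p + δ`, so its moment generating function at `δ` is at most `cosh δ - δ sinh δ ≤ 1 - δ² / 2
≤ exp (-δ² / 2)`. Hence the probability is at most `exp (-n δ² / 2) ≤ ε`. -/

noncomputable def wt (p : ℝ) (b : Bool) : ℝ := if b then p else 1 - p

noncomputable def wtv {n : ℕ} (p : ℝ) (x : Fin n → Bool) : ℝ := ∏ i, wt p (x i)

namespace Real

theorem cosh_sub_mul_sinh_le (x : ℝ) : cosh x - x * sinh x ≤ 1 - x ^ 2 / 2 := by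
  set f : ℝ → ℝ := fun y => 1 - y ^ 2 / 2 - cosh y + y * sinh y
  have hf' (y : ℝ) : HasDerivAt f (y * (cosh y - 1)) y := by
    have := ((((hasDerivAt_id y).pow 2).div_const 2).const_sub 1 |>.sub (hasDerivAt_cosh y)).add
      ((hasDerivAt_id y).mul (hasDerivAt_sinh y))
    refine this.congr_deriv ?_
    simp only [id, Nat.cast_ofNat]
    ring
  have hmono : MonotoneOn f (Set.Ici 0) :=
    monotoneOn_of_hasDerivWithinAt_nonneg (convex_Ici 0) (by fun_prop)
      (fun y _ => (hf' y).hasDerivWithinAt)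
      (fun y hy => mul_nonneg (by simp at hy; exact hy.le) (sub_nonneg.2 (one_le_cosh y)))
  have hpos {y : ℝ} (hy : 0 ≤ y) : 0 ≤ 1 - y ^ 2 / 2 - cosh y + y * sinh y := by
    simpa [f] using hmono Set.self_mem_Ici hy hy
  rcases le_total 0 x with hx | hx
  · linarith [hpos hx]
  · have := hpos (neg_nonneg.2 hx)
    rw [cosh_neg, sinh_neg, neg_sq, neg_mul_neg] at this
    linarith

theorem three_point_mgf_le {p q t : ℝ} (hpq : p + q ≤ 1) (hmean : q - p = t) :
    1 - p - q + p * exp t + q * exp (-t) ≤ cosh t - t * sinh t := by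
  -- the right side minus the left side is `(cosh t - 1) * (1 - p - q)`
  have key := mul_nonneg (sub_nonneg.2 (one_le_cosh t)) (sub_nonneg.2 hpq)
  rw [cosh_eq, sinh_eq] at *
  subst hmean
  nlinarith

theorem exp_neg_pow_le_of_log_div_le {c ε : ℝ} {n : ℕ} (hc : 0 < c) (hε : 0 < ε)
    (hn : log (1 / ε) / c ≤ n) : exp (-c) ^ n ≤ ε := by
  rw [div_le_iff₀ hc, one_div, log_inv] at hn
  rw [← exp_nat_mul, ← exp_log hε, exp_le_exp]
  linarith

theorem ite_le_exp_mul_sub {a b t : ℝ} (ht : 0 ≤ t) :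
    (if a ≤ b then (1 : ℝ) else 0) ≤ exp (t * (b - a)) := by
  split_ifs with hab
  · exact one_le_exp (mul_nonneg ht (sub_nonneg.2 hab))
  · exact (exp_pos _).le

end Real

open Real

theorem Fintype.sum_pi_sum_pi_sum_pi_prod_eq_pow {R ι α : Type*} [CommSemiring R] [Fintype ι]
    [DecidableEq ι] [Fintype α] (G : α → α → α → R) :
    ∑ x : ι → α, ∑ y : ι → α, ∑ z : ι → α, ∏ i, G (x i) (y i) (z i) =
      (∑ a, ∑ b, ∑ c, G a b c) ^ Fintype.card ι := by
  calc ∑ x : ι → α, ∑ y : ι → α, ∑ z : ι → α, ∏ i, G (x i) (y i) (z i)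
      = ∑ x : ι → α, ∑ y : ι → α, ∏ i, ∑ c, G (x i) (y i) c := by
        simp only [Fintype.prod_sum fun i c => G _ _ c]
    _ = ∑ x : ι → α, ∏ i, ∑ b, ∑ c, G (x i) b c := by
        simp only [Fintype.prod_sum fun i b => ∑ c, G _ b c]
    _ = ∏ _i : ι, ∑ a, ∑ b, ∑ c, G a b c := (Fintype.prod_sum fun _ a => ∑ b, ∑ c, G a b c).symm
    _ = (∑ a, ∑ b, ∑ c, G a b c) ^ Fintype.card ι := Finset.prod_const _

def mismatch {β : Type*} [DecidableEq β] (a b : β) : ℝ := if a ≠ b then 1 else 0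

theorem hammingDist_eq_sum_mismatch {ι β : Type*} [Fintype ι] [DecidableEq β] (x y : ι → β) :
    (hammingDist x y : ℝ) = ∑ i, mismatch (x i) (y i) := by
  simp [hammingDist, Finset.card_filter, mismatch]

theorem wt_nonneg {p : ℝ} (hp : p ∈ Set.Icc 0 1) (b : Bool) : 0 ≤ wt p b := by
  cases b <;> simp [wt, hp.1, hp.2]

theorem wtv_nonneg {n : ℕ} {p : ℝ} (hp : p ∈ Set.Icc 0 1) (x : Fin n → Bool) : 0 ≤ wtv p x :=
  Finset.prod_nonneg fun i _ => wt_nonneg hp (x i)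

/-- Moment generating function of one coordinate's contribution `[a ≠ c] - [b ≠ c]` to
`d(s_h, s_z) - d(s_l, s_z)`. -/
noncomputable def disagreeMgf (ph pl pz t : ℝ) : ℝ :=
  ∑ a, ∑ b, ∑ c, wt ph a * wt pl b * wt pz c * exp (t * (mismatch a c - mismatch b c))

theorem disagreeMgf_nonneg {ph pl pz : ℝ} (hph : ph ∈ Set.Icc 0 1) (hpl : pl ∈ Set.Icc 0 1)
    (hpz : pz ∈ Set.Icc 0 1) (t : ℝ) : 0 ≤ disagreeMgf ph pl pz t :=
  Finset.sum_nonneg fun a _ => Finset.sum_nonneg fun b _ => Finset.sum_nonneg fun c _ =>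
    mul_nonneg (mul_nonneg (mul_nonneg (wt_nonneg hph a) (wt_nonneg hpl b)) (wt_nonneg hpz c))
      (exp_pos _).le

theorem disagreeMgf_eq (ph pl pz t : ℝ) :
    disagreeMgf ph pl pz t =
      1 - (ph * (1 - pl) * (1 - pz) + (1 - ph) * pl * pz)
        - (ph * (1 - pl) * pz + (1 - ph) * pl * (1 - pz))
        + (ph * (1 - pl) * (1 - pz) + (1 - ph) * pl * pz) * exp t
        + (ph * (1 - pl) * pz + (1 - ph) * pl * (1 - pz)) * exp (-t) := by
  simp only [disagreeMgf, Fintype.sum_bool, wt, mismatch, ne_eq, Bool.true_eq_false,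
    Bool.false_eq_true, not_true_eq_false, not_false_eq_true, if_true, if_false, sub_self, sub_zero,
    zero_sub, mul_zero, mul_one, exp_zero, mul_neg]
  ring

theorem disagreeMgf_le_exp {ph pl pz : ℝ} (hph : ph ∈ Set.Icc 0 1) (hpl : pl ∈ Set.Icc 0 1) :
    disagreeMgf ph pl pz ((ph - pl) * (2 * pz - 1)) ≤
      exp (-(((ph - pl) * (2 * pz - 1)) ^ 2 / 2)) := by
  set δ := (ph - pl) * (2 * pz - 1)
  have hagree : 0 ≤ ph * pl + (1 - ph) * (1 - pl) :=
    add_nonneg (mul_nonneg hph.1 hpl.1) (mul_nonneg (sub_nonneg.2 hph.2) (sub_nonneg.2 hpl.2))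
  calc disagreeMgf ph pl pz δ ≤ cosh δ - δ * sinh δ := by
        rw [disagreeMgf_eq]
        exact three_point_mgf_le (by linarith) (by ring)
    _ ≤ 1 - δ ^ 2 / 2 := cosh_sub_mul_sinh_le δ
    _ ≤ exp (-(δ ^ 2 / 2)) := by linarith [add_one_le_exp (-(δ ^ 2 / 2))]

theorem wtv_mul_exp_hammingDist_eq_prod {n : ℕ} (ph pl pz t : ℝ) (x y z : Fin n → Bool) :
    wtv ph x * wtv pl y * wtv pz z * exp (t * (hammingDist x z - hammingDist y z)) =
      ∏ i, wt ph (x i) * wt pl (y i) * wt pz (z i) *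
        exp (t * (mismatch (x i) (z i) - mismatch (y i) (z i))) := by
  simp only [wtv, hammingDist_eq_sum_mismatch, ← Finset.sum_sub_distrib, Finset.mul_sum,
    exp_sum, Finset.prod_mul_distrib]

theorem sum_wtv_mul_ite_hammingDist_le_disagreeMgf_pow {n : ℕ} {ph pl pz t : ℝ}
    (hph : ph ∈ Set.Icc 0 1) (hpl : pl ∈ Set.Icc 0 1) (hpz : pz ∈ Set.Icc 0 1) (ht : 0 ≤ t) :
    ∑ x : Fin n → Bool, ∑ y : Fin n → Bool, ∑ z : Fin n → Bool,
      wtv ph x * wtv pl y * wtv pz z *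
        (if hammingDist y z ≤ hammingDist x z then (1 : ℝ) else 0)
      ≤ disagreeMgf ph pl pz t ^ n := by
  calc _ ≤ ∑ x : Fin n → Bool, ∑ y : Fin n → Bool, ∑ z : Fin n → Bool,
        wtv ph x * wtv pl y * wtv pz z * exp (t * (hammingDist x z - hammingDist y z)) := by
        gcongr with x _ y _ z _
        · exact mul_nonneg (mul_nonneg (wtv_nonneg hph x) (wtv_nonneg hpl y)) (wtv_nonneg hpz z)
        · simpa only [Nat.cast_le] using
            ite_le_exp_mul_sub (a := (hammingDist y z : ℝ)) (b := hammingDist x z) ht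
    _ = disagreeMgf ph pl pz t ^ n := by
        simp only [wtv_mul_exp_hammingDist_eq_prod]
        rw [Fintype.sum_pi_sum_pi_sum_pi_prod_eq_pow
          (fun a b c => wt ph a * wt pl b * wt pz c * exp (t * (mismatch a c - mismatch b c))),
          Fintype.card_fin, disagreeMgf]

/-- Sample complexity: if `n ≥ 2 ln(1/ε) / ((p_h - p_l)² (2 p_z - 1)²)` then the
probability that the follower is at least as close to the worse leader,
`Pr(d(s_h, s_z) ≥ d(s_l, s_z))`, is at most `ε`. -/
theorem stmt16 (n : ℕ) (ph pl pz ε : ℝ) (hl : 1/2 < pl) (hlh : pl < ph) (hph : ph ≤ 1)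
    (hz : 1/2 < pz) (hpz : pz ≤ 1) (hε : 0 < ε)
    (hn : 2 * Real.log (1/ε) / ((ph - pl)^2 * (2*pz - 1)^2) ≤ n) :
    ∑ x : Fin n → Bool, ∑ y : Fin n → Bool, ∑ z : Fin n → Bool,
      wtv ph x * wtv pl y * wtv pz z *
        (if hammingDist y z ≤ hammingDist x z then (1:ℝ) else 0)
      ≤ ε := by
  have hph' : ph ∈ Set.Icc 0 1 := ⟨by linarith, hph⟩
  have hpl' : pl ∈ Set.Icc 0 1 := ⟨by linarith, by linarith⟩
  have hpz' : pz ∈ Set.Icc 0 1 := ⟨by linarith, hpz⟩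
  have hδ : 0 < (ph - pl) * (2 * pz - 1) := mul_pos (by linarith) (by linarith)
  calc _ ≤ disagreeMgf ph pl pz ((ph - pl) * (2 * pz - 1)) ^ n :=
        sum_wtv_mul_ite_hammingDist_le_disagreeMgf_pow hph' hpl' hpz' hδ.le
    _ ≤ exp (-(((ph - pl) * (2 * pz - 1)) ^ 2 / 2)) ^ n :=
        pow_le_pow_left₀ (disagreeMgf_nonneg hph' hpl' hpz' _) (disagreeMgf_le_exp hph' hpl') n
    _ ≤ ε := exp_neg_pow_le_of_log_div_le (by positivity) hε (by
        rwa [mul_pow, div_div_eq_mul_div, mul_comm (log _)])
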